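/- Let X be a topological space and x₀ ∈ X. Then X is SSLT at x₀ if and only if π₁^s(X, x₀) = π₁^{sg}(X, x₀). -/

import Mathlib

open TopologicalSpace

attribute [local instance] Path.Homotopic.setoid

/-- The homotopy class of a loop, as an element of the fundamental group. -/
noncomputable def loopClass {X : Type*} [TopologicalSpace X] {x : X} (γ : Path x x) :
    FundamentalGroup X x :=
  FundamentalGroup.fromPath (X := TopCat.of X) ⟦γ⟧

/-- `α` is a small loop transfer (SLT) path: for every open neighborhood `U` of `α 0`
there is an open neighborhood `V` of `α 1` such that every loop at `α 1` inside `V` is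
path-homotopic to some loop at `α 0` inside `U` conjugated along `α`. -/
def IsSLTPath {X : Type*} [TopologicalSpace X] {x₀ x₁ : X} (α : Path x₀ x₁) : Prop :=
  ∀ U : Set X, IsOpen U → x₀ ∈ U →
    ∃ V : Set X, IsOpen V ∧ x₁ ∈ V ∧
      ∀ γ : Path x₁ x₁, (∀ t, γ t ∈ V) →
        ∃ γ' : Path x₀ x₀, (∀ t, γ' t ∈ U) ∧
          γ'.Homotopic ((α.trans γ).trans α.symm)

/-- `X` is a small loop transfer space at `x₀`: every path starting at `x₀` is an SLT path. -/
def IsSLTAt (X : Type*) [TopologicalSpace X] (x₀ : X) : Prop :=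
  ∀ (x₁ : X) (α : Path x₀ x₁), IsSLTPath α

/-- `X` is SLTL at `x₀`: every loop based at `x₀` is an SLT path. -/
def IsSLTLAt (X : Type*) [TopologicalSpace X] (x₀ : X) : Prop :=
  ∀ γ : Path x₀ x₀, IsSLTPath γ

/-- `X` is SLTP at `x₀`: every non-loop path starting at `x₀` is an SLT path. -/
def IsSLTPAt (X : Type*) [TopologicalSpace X] (x₀ : X) : Prop :=
  ∀ (x₁ : X) (α : Path x₀ x₁), x₁ ≠ x₀ → IsSLTPath α

/-- The set of homotopy classes of loops based at `x₀` with image contained in `U`;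
this is the image `i₊π₁(U, x₀)` of the homomorphism induced by the inclusion `U → X`. -/
noncomputable def loopClassesIn {X : Type*} [TopologicalSpace X] (x₀ : X) (U : Set X) :
    Set (FundamentalGroup X x₀) :=
  { g | ∃ γ : Path x₀ x₀, (∀ t, γ t ∈ U) ∧ g = loopClass γ }

/-- The quotient topology on the fundamental group, coinduced by the map from the loop
space (with the compact-open topology) sending a loop to its homotopy class. -/
noncomputable def qtop (X : Type*) [TopologicalSpace X] (x₀ : X) :
    TopologicalSpace (FundamentalGroup X x₀) :=
  coinduced (fun γ : Path x₀ x₀ => loopClass γ) inferInstance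

/-- The whisker topology on the fundamental group, generated by the basis of cosets
`[α] · i₊π₁(U, x₀)` for `U` an open neighborhood of `x₀`. -/
noncomputable def whTop (X : Type*) [TopologicalSpace X] (x₀ : X) :
    TopologicalSpace (FundamentalGroup X x₀) :=
  generateFrom { S | ∃ (g : FundamentalGroup X x₀) (U : Set X), IsOpen U ∧ x₀ ∈ U ∧
      S = (fun h => g * h) '' loopClassesIn x₀ U }

/-- A loop based at `x` is small if every open neighborhood of `x` contains a
representative of its homotopy class. -/
def IsSmallLoop {X : Type*} [TopologicalSpace X] {x : X} (γ : Path x x) : Prop :=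
  ∀ U : Set X, IsOpen U → x ∈ U →
    ∃ δ : Path x x, (∀ t, δ t ∈ U) ∧ δ.Homotopic γ

/-- `π₁ˢ(X, x)`: the set of homotopy classes of small loops based at `x`. -/
noncomputable def pi1s {X : Type*} [TopologicalSpace X] (x : X) :
    Set (FundamentalGroup X x) :=
  { g | ∃ γ : Path x x, IsSmallLoop γ ∧ g = loopClass γ }

/-- `π₁ˢᵍ(X, x₀)`: the subgroup generated by classes `[α * β * α⁻¹]` where `α` is a path
starting at `x₀` and `β` is a small loop based at `α 1`. -/
noncomputable def pi1sg {X : Type*} [TopologicalSpace X] (x₀ : X) :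
    Subgroup (FundamentalGroup X x₀) :=
  Subgroup.closure { g | ∃ (x₁ : X) (α : Path x₀ x₁) (β : Path x₁ x₁), IsSmallLoop β ∧
      g = loopClass ((α.trans β).trans α.symm) }

/-- The path Spanier group of a path open cover `V` at `x₀`: the subgroup generated by the
classes `[α * β * α⁻¹]` where `α` is a path starting at `x₀` and `β` is a loop based at
`α 1` with image inside `V α`. -/
noncomputable def pathSpanierGroup {X : Type*} [TopologicalSpace X] (x₀ : X)
    (V : ∀ x₁ : X, Path x₀ x₁ → Set X) : Subgroup (FundamentalGroup X x₀) :=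
  Subgroup.closure { g | ∃ (x₁ : X) (α : Path x₀ x₁) (β : Path x₁ x₁),
      (∀ t, β t ∈ V x₁ α) ∧ g = loopClass ((α.trans β).trans α.symm) }

/-- `X` is small "small loop" transfer (SSLT) at `x₀`. -/
def IsSSLTAt (X : Type*) [TopologicalSpace X] (x₀ : X) : Prop :=
  ∀ (x₁ : X) (α : Path x₀ x₁) (U : Set X), IsOpen U → x₀ ∈ U →
    ∃ V : Set X, IsOpen V ∧ x₁ ∈ V ∧
      ∀ β : Path x₁ x₁, IsSmallLoop β → (∀ t, β t ∈ V) →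
        ∃ γ : Path x₀ x₀, (∀ t, γ t ∈ U) ∧
          γ.Homotopic ((α.trans β).trans α.symm)

/-- `X` is semilocally small generated: every point has an open neighborhood `U` with
`i₊π₁(U, x) ≤ π₁ˢᵍ(X, x)`. -/
noncomputable def SemilocallySmallGenerated (X : Type*) [TopologicalSpace X] : Prop :=
  ∀ x : X, ∃ U : Set X, IsOpen U ∧ x ∈ U ∧ loopClassesIn x U ⊆ (pi1sg x : Set (FundamentalGroup X x))
section SmallLoops

variable {X : Type*} [TopologicalSpace X]

lemma loopClass_eq_iff {x : X} {γ δ : Path x x} :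
    loopClass γ = loopClass δ ↔ γ.Homotopic δ :=
  ⟨fun h => Quotient.exact (congrArg (FundamentalGroup.toPath (X := TopCat.of X)) h),
    fun h => congrArg (FundamentalGroup.fromPath (X := TopCat.of X)) (Quotient.sound h)⟩

lemma loopClass_trans {x : X} (γ δ : Path x x) :
    loopClass (γ.trans δ) = loopClass δ * loopClass γ :=
  rfl

lemma loopClass_symm {x : X} (γ : Path x x) : loopClass γ.symm = (loopClass γ)⁻¹ :=
  rfl

lemma loopClass_refl (x : X) : loopClass (Path.refl x) = 1 :=
  rfl

lemma IsSmallLoop.of_homotopic {x : X} {γ δ : Path x x} (h : IsSmallLoop γ)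
    (hγδ : γ.Homotopic δ) : IsSmallLoop δ := fun U hU hx => by
  obtain ⟨ε, hεU, hεγ⟩ := h U hU hx
  exact ⟨ε, hεU, hεγ.trans hγδ⟩

lemma IsSmallLoop.refl (x : X) : IsSmallLoop (Path.refl x) := fun _ _ hx =>
  ⟨Path.refl x, fun _ => hx, Path.Homotopic.refl _⟩

lemma IsSmallLoop.trans {x : X} {γ δ : Path x x} (hγ : IsSmallLoop γ)
    (hδ : IsSmallLoop δ) : IsSmallLoop (γ.trans δ) := fun U hU hx => by
  obtain ⟨γ', hγ'U, hγ'γ⟩ := hγ U hU hx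
  obtain ⟨δ', hδ'U, hδ'δ⟩ := hδ U hU hx
  refine ⟨γ'.trans δ', Set.range_subset_iff.mp ?_, hγ'γ.hcomp hδ'δ⟩
  rw [Path.trans_range]
  exact Set.union_subset (Set.range_subset_iff.mpr hγ'U) (Set.range_subset_iff.mpr hδ'U)

lemma IsSmallLoop.symm {x : X} {γ : Path x x} (h : IsSmallLoop γ) :
    IsSmallLoop γ.symm := fun U hU hx => by
  obtain ⟨γ', hγ'U, hγ'γ⟩ := h U hU hx
  refine ⟨γ'.symm, Set.range_subset_iff.mp ?_, hγ'γ.symm₂⟩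
  rw [Path.symm_range]
  exact Set.range_subset_iff.mpr hγ'U

lemma loopClass_mem_pi1s_iff {x : X} {γ : Path x x} :
    loopClass γ ∈ pi1s x ↔ IsSmallLoop γ :=
  ⟨fun ⟨_, hδ, hδγ⟩ => hδ.of_homotopic (loopClass_eq_iff.mp hδγ.symm), fun h => ⟨γ, h, rfl⟩⟩

noncomputable def pi1sSubgroup (x : X) : Subgroup (FundamentalGroup X x) where
  carrier := pi1s x
  one_mem' := ⟨Path.refl x, IsSmallLoop.refl x, (loopClass_refl x).symm⟩
  mul_mem' := by
    rintro _ _ ⟨γ, hγ, rfl⟩ ⟨δ, hδ, rfl⟩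
    exact ⟨δ.trans γ, hδ.trans hγ, (loopClass_trans δ γ).symm⟩
  inv_mem' := by
    rintro _ ⟨γ, hγ, rfl⟩
    exact ⟨γ.symm, hγ.symm, (loopClass_symm γ).symm⟩

lemma pi1s_subset_pi1sg (x₀ : X) : pi1s x₀ ⊆ (pi1sg x₀ : Set (FundamentalGroup X x₀)) := by
  rintro _ ⟨γ, hγ, rfl⟩
  refine Subgroup.subset_closure ⟨x₀, Path.refl x₀, γ, hγ, loopClass_eq_iff.mpr ?_⟩
  rw [Path.refl_symm]
  exact (Path.Homotopic.trans ⟨Path.Homotopy.transRefl _⟩ ⟨Path.Homotopy.reflTrans γ⟩).symm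

lemma pi1sg_subset_pi1s_iff (x₀ : X) :
    (pi1sg x₀ : Set (FundamentalGroup X x₀)) ⊆ pi1s x₀ ↔
      ∀ (x₁ : X) (α : Path x₀ x₁) (β : Path x₁ x₁),
        IsSmallLoop β → IsSmallLoop ((α.trans β).trans α.symm) := by
  change pi1sg x₀ ≤ pi1sSubgroup x₀ ↔ _
  rw [pi1sg, Subgroup.closure_le]
  constructor
  · exact fun h x₁ α β hβ => loopClass_mem_pi1s_iff.mp (h ⟨x₁, α, β, hβ, rfl⟩)
  · rintro h _ ⟨x₁, α, β, hβ, rfl⟩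
    exact loopClass_mem_pi1s_iff.mpr (h x₁ α β hβ)

/- The neighbourhood `V` in the SSLT condition can always be taken to be `X`: a small loop is
homotopic to a small loop inside any given `V`. -/
lemma isSSLTAt_iff_forall_isSmallLoop_conj (x₀ : X) :
    IsSSLTAt X x₀ ↔ ∀ (x₁ : X) (α : Path x₀ x₁) (β : Path x₁ x₁),
      IsSmallLoop β → IsSmallLoop ((α.trans β).trans α.symm) := by
  constructor
  · intro h x₁ α β hβ U hU hx
    obtain ⟨V, hV, hx₁V, hVU⟩ := h x₁ α U hU hx
    obtain ⟨β', hβ'V, hβ'β⟩ := hβ V hV hx₁V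
    obtain ⟨γ, hγU, hγ⟩ := hVU β' (hβ.of_homotopic hβ'β.symm) hβ'V
    exact ⟨γ, hγU, hγ.trans ((Path.Homotopic.refl α).hcomp hβ'β |>.hcomp (.refl _))⟩
  · intro h x₁ α U hU hx
    exact ⟨Set.univ, isOpen_univ, trivial, fun β hβ _ => h x₁ α β hβ U hU hx⟩

end SmallLoops

/-- `X` is SSLT at `x₀` iff `π₁ˢ(X, x₀) = π₁ˢᵍ(X, x₀)`. -/
theorem sslt_iff_pi1s_eq_pi1sg {X : Type*} [TopologicalSpace X] (x₀ : X) :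
    IsSSLTAt X x₀ ↔ pi1s x₀ = (pi1sg x₀ : Set (FundamentalGroup X x₀)) := by
  rw [isSSLTAt_iff_forall_isSmallLoop_conj, ← pi1sg_subset_pi1s_iff, Set.Subset.antisymm_iff,
    and_iff_right (pi1s_subset_pi1sg x₀)]
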